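/- arXiv:2412.08322 — 2 statements merged into one kernel-verified Lean document; each statement's English description precedes it below -/
import Mathlib

section
/- Let F(x, z) = p(z)x + q(z) be a state-affine system on ℝ^N with inputs in a compact set D ⊂ ℝ^n, where there exists a matrix norm ‖·‖ and ε > 0 with ‖p(z)‖ < 1 − ε for all z ∈ D, and p, q are bounded. Then for every bi-infinite input sequence z ∈ D^ℤ the series U(z)_t = Σ_{j=0}^∞ (Π_{k=0}^{j-1} p(z_{t-k})) q(z_{t-j}) converges absolutely, and the resulting sequence is the unique solution of x_t = p(z_t)x_{t-1} + q(z_t); in particular F has the echo state property. -/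
open scoped BigOperators

/-- The product `Π_{k=0}^{j-1} p(z_{t-k}) = p(z_t)·p(z_{t-1})⋯p(z_{t-j+1})`,
the empty product (j = 0) being the identity. -/
noncomputable def sasProd {n N : ℕ}
    (p : (Fin n → ℝ) → (Fin N → ℝ) →L[ℝ] (Fin N → ℝ))
    (z : ℤ → Fin n → ℝ) (t : ℤ) : ℕ → ((Fin N → ℝ) →L[ℝ] (Fin N → ℝ))
  | 0 => 1
  | j + 1 => sasProd p z t j ∘L p (z (t - (j : ℤ)))

lemma sasProd_succ_left {n N : ℕ}
    (p : (Fin n → ℝ) → (Fin N → ℝ) →L[ℝ] (Fin N → ℝ))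
    (z : ℤ → Fin n → ℝ) (t : ℤ) (j : ℕ) :
    sasProd p z t (j + 1) = p (z t) ∘L sasProd p z (t - 1) j := by
  induction j with
  | zero =>
      show sasProd p z t 1 = _
      ext v
      simp [sasProd]
  | succ j ih =>
      have h1 : sasProd p z t (j + 2) = sasProd p z t (j+1) ∘L p (z (t - ((j:ℤ)+1))) := by
        show sasProd p z t ((j+1)+1) = _
        rw [sasProd]; push_cast; ring_nf
      have h2 : sasProd p z (t-1) (j + 1) = sasProd p z (t-1) j ∘L p (z ((t-1) - (j:ℤ))) := by
        rw [sasProd]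
      rw [h1, ih, h2, ContinuousLinearMap.comp_assoc]
      congr 2
      ring_nf

lemma sasProd_norm_le {n N : ℕ} (D : Set (Fin n → ℝ))
    (p : (Fin n → ℝ) → (Fin N → ℝ) →L[ℝ] (Fin N → ℝ))
    (ε : ℝ)
    (hp : ∀ v ∈ D, ‖p v‖ < 1 - ε)
    (z : ℤ → Fin n → ℝ) (hz : ∀ t, z t ∈ D) (t : ℤ) (j : ℕ) :
    ‖sasProd p z t j‖ ≤ (1 - ε) ^ j := by
  have hnn : (0:ℝ) ≤ 1 - ε := le_of_lt (lt_of_le_of_lt (norm_nonneg _) (hp _ (hz t)))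
  induction j with
  | zero =>
      show ‖(1 : (Fin N → ℝ) →L[ℝ] (Fin N → ℝ))‖ ≤ 1
      exact ContinuousLinearMap.norm_id_le
  | succ j ih =>
      rw [sasProd, pow_succ]
      calc ‖sasProd p z t j ∘L p (z (t - (j:ℤ)))‖
          ≤ ‖sasProd p z t j‖ * ‖p (z (t - (j:ℤ)))‖ := ContinuousLinearMap.opNorm_comp_le _ _
        _ ≤ (1 - ε)^j * (1 - ε) := by
            apply mul_le_mul ih (le_of_lt (hp _ (hz _))) (norm_nonneg _) (pow_nonneg hnn _)

/-- For a state-affine system `F(x,z) = p(z)x + q(z)` on `ℝ^N`,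
inputs in a compact set `D ⊂ ℝ^n`, with `‖p(z)‖ < 1 - ε` for an operator norm
and `q` bounded, for every bi-infinite input sequence the series
`U(z)_t = Σ_j (Π_{k<j} p(z_{t-k})) q(z_{t-j})` converges absolutely and the
resulting sequence is the unique (bounded) solution of
`x_t = p(z_t)x_{t-1} + q(z_t)`; in particular `F` has the echo state property. -/
theorem stmt2 {n N : ℕ} (D : Set (Fin n → ℝ)) (hD : IsCompact D)
    (p : (Fin n → ℝ) → (Fin N → ℝ) →L[ℝ] (Fin N → ℝ))
    (q : (Fin n → ℝ) → (Fin N → ℝ))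
    (ε : ℝ) (hε : 0 < ε)
    (hp : ∀ v ∈ D, ‖p v‖ < 1 - ε)
    (M : ℝ) (hq : ∀ v ∈ D, ‖q v‖ ≤ M)
    (z : ℤ → Fin n → ℝ) (hz : ∀ t, z t ∈ D) :
    (∀ t : ℤ, Summable (fun j : ℕ => ‖sasProd p z t j (q (z (t - (j : ℤ))))‖)) ∧
    (∃! x : ℤ → Fin N → ℝ,
      (∃ C, ∀ t, ‖x t‖ ≤ C) ∧ (∀ t, x t = p (z t) (x (t - 1)) + q (z t))) ∧
    (∀ x : ℤ → Fin N → ℝ,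
      (∃ C, ∀ t, ‖x t‖ ≤ C) → (∀ t, x t = p (z t) (x (t - 1)) + q (z t)) →
      ∀ t, x t = ∑' j : ℕ, sasProd p z t j (q (z (t - (j : ℤ))))) := by
  have hr0 : (0:ℝ) ≤ 1 - ε := le_of_lt (lt_of_le_of_lt (norm_nonneg _) (hp _ (hz 0)))
  have hr1 : (1 - ε : ℝ) < 1 := by linarith
  have hM0 : 0 ≤ M := le_trans (norm_nonneg _) (hq _ (hz 0))
  have hgeom : Summable (fun j : ℕ => (1 - ε)^j * M) :=
    (summable_geometric_of_lt_one hr0 hr1).mul_right M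
  have hbound : ∀ (t : ℤ) (j : ℕ),
      ‖sasProd p z t j (q (z (t - (j : ℤ))))‖ ≤ (1 - ε)^j * M := by
    intro t j
    calc ‖sasProd p z t j (q (z (t - (j : ℤ))))‖
        ≤ ‖sasProd p z t j‖ * ‖q (z (t - (j : ℤ)))‖ := (sasProd p z t j).le_opNorm _
      _ ≤ (1 - ε)^j * M := mul_le_mul (sasProd_norm_le D p ε hp z hz t j)
            (hq _ (hz _)) (norm_nonneg _) (pow_nonneg hr0 _)
  have hnsum : ∀ t : ℤ, Summable (fun j : ℕ => ‖sasProd p z t j (q (z (t - (j : ℤ))))‖) := by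
    intro t
    exact Summable.of_nonneg_of_le (fun j => norm_nonneg _) (hbound t) hgeom
  have hsum : ∀ t : ℤ, Summable (fun j : ℕ => sasProd p z t j (q (z (t - (j : ℤ))))) := by
    intro t
    exact (hnsum t).of_norm
  -- boundedness of the candidate solution
  have hUb : ∀ t : ℤ, ‖∑' j : ℕ, sasProd p z t j (q (z (t - (j : ℤ))))‖ ≤ ε⁻¹ * M := by
    intro t
    have h1 := norm_tsum_le_tsum_norm (hnsum t)
    have h2 : (∑' j : ℕ, ‖sasProd p z t j (q (z (t - (j : ℤ))))‖)
        ≤ ∑' j : ℕ, (1 - ε)^j * M := Summable.tsum_le_tsum (hbound t) (hnsum t) hgeom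
    have h3 : (∑' j : ℕ, (1 - ε)^j * M) = (1 - (1-ε))⁻¹ * M := by
      rw [tsum_mul_right, tsum_geometric_of_lt_one hr0 hr1]
    have h4 : (1:ℝ) - (1 - ε) = ε := by ring
    rw [h4] at h3
    linarith
  -- the candidate solution satisfies the recurrence
  have hUrec : ∀ t : ℤ, (∑' j : ℕ, sasProd p z t j (q (z (t - (j : ℤ)))))
      = p (z t) (∑' j : ℕ, sasProd p z (t-1) j (q (z ((t-1) - (j : ℤ))))) + q (z t) := by
    intro t
    have h1 : ∀ j : ℕ, sasProd p z t (j+1) (q (z (t - ((j:ℕ)+1 : ℤ))))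
        = p (z t) (sasProd p z (t-1) j (q (z ((t-1) - (j : ℤ))))) := by
      intro j
      rw [sasProd_succ_left]
      have e : t - ((j:ℕ)+1 : ℤ) = (t-1) - (j:ℤ) := by ring
      rw [e]
      rfl
    calc (∑' j : ℕ, sasProd p z t j (q (z (t - (j : ℤ)))))
        = sasProd p z t 0 (q (z (t - ((0:ℕ) : ℤ)))) +
            ∑' j : ℕ, sasProd p z t (j+1) (q (z (t - ((j:ℕ)+1 : ℤ)))) := by
          have := Summable.tsum_eq_zero_add (hsum t)
          simpa using this
      _ = q (z t) + ∑' j : ℕ, p (z t) (sasProd p z (t-1) j (q (z ((t-1) - (j : ℤ))))) := by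
          rw [tsum_congr h1]
          congr 1
          simp [sasProd]
      _ = q (z t) + p (z t) (∑' j : ℕ, sasProd p z (t-1) j (q (z ((t-1) - (j : ℤ))))) := by
          rw [(p (z t)).map_tsum (hsum (t-1))]
      _ = _ := by abel
  -- any bounded solution equals the candidate
  have key : ∀ x : ℤ → Fin N → ℝ,
      (∃ C, ∀ t, ‖x t‖ ≤ C) → (∀ t, x t = p (z t) (x (t - 1)) + q (z t)) →
      ∀ t, x t = ∑' j : ℕ, sasProd p z t j (q (z (t - (j : ℤ)))) := by
    intro x ⟨C, hC⟩ hx t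
    have step : ∀ k : ℕ, x t = sasProd p z t k (x (t - (k:ℤ))) +
        ∑ j ∈ Finset.range k, sasProd p z t j (q (z (t - (j : ℤ)))) := by
      intro k
      induction k with
      | zero => simp [sasProd]
      | succ k ih =>
          have hx' : x (t - (k:ℤ)) =
              p (z (t - (k:ℤ))) (x (t - ((k+1:ℕ):ℤ))) + q (z (t - (k:ℤ))) := by
            have h := hx (t - (k:ℤ))
            rw [h]
            congr 2
            push_cast
            ring
          have hcomp : sasProd p z t k (p (z (t - (k:ℤ))) (x (t - ((k+1:ℕ):ℤ))))
              = sasProd p z t (k+1) (x (t - ((k+1:ℕ):ℤ))) := by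
            rw [sasProd]
            rfl
          rw [ih, hx', map_add, hcomp, Finset.sum_range_succ]
          abel
    have hlim1 : Filter.Tendsto (fun k : ℕ => sasProd p z t k (x (t - (k:ℤ))))
        Filter.atTop (nhds 0) := by
      have hb : ∀ k : ℕ, ‖sasProd p z t k (x (t - (k:ℤ)))‖ ≤ (1-ε)^k * C := by
        intro k
        calc ‖sasProd p z t k (x (t - (k:ℤ)))‖
            ≤ ‖sasProd p z t k‖ * ‖x (t - (k:ℤ))‖ := (sasProd p z t k).le_opNorm _
          _ ≤ (1-ε)^k * C := mul_le_mul (sasProd_norm_le D p ε hp z hz t k) (hC _)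
              (norm_nonneg _) (pow_nonneg hr0 _)
      have ht : Filter.Tendsto (fun k : ℕ => (1-ε)^k * C) Filter.atTop (nhds 0) := by
        have := tendsto_pow_atTop_nhds_zero_of_lt_one hr0 hr1
        simpa using this.mul_const C
      exact squeeze_zero_norm hb ht
    have hlim2 : Filter.Tendsto
        (fun k : ℕ => ∑ j ∈ Finset.range k, sasProd p z t j (q (z (t - (j : ℤ)))))
        Filter.atTop (nhds (∑' j : ℕ, sasProd p z t j (q (z (t - (j : ℤ)))))) :=
      (hsum t).hasSum.tendsto_sum_nat
    have hlim : Filter.Tendsto (fun _ : ℕ => x t) Filter.atTop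
        (nhds (0 + ∑' j : ℕ, sasProd p z t j (q (z (t - (j : ℤ)))))) := by
      refine (hlim1.add hlim2).congr ?_
      intro k
      exact (step k).symm
    have := tendsto_nhds_unique tendsto_const_nhds hlim
    rw [this, zero_add]
  refine ⟨hnsum, ⟨fun t => ∑' j : ℕ, sasProd p z t j (q (z (t - (j : ℤ)))),
    ⟨⟨ε⁻¹ * M, hUb⟩, fun t => hUrec t⟩,
    fun y hy => funext fun t => key y hy.1 hy.2 t⟩,
    fun x hx1 hx2 t => key x hx1 hx2 t⟩
end

section
/- Let F : V × D → V be contractive in the first argument with injective fixed-point map x* : D → V. Then for any x₀ in the image of x*, the preimage U_F^{-1}((…,x₀,x₀)) of the constant output sequence contains exactly one constant input sequence, namely (…, z₀, z₀) where z₀ is the unique element with x*(z₀) = x₀; moreover this preimage consists only of this constant sequence. -/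
/-- If moreover the fixed-point map `x* : D → V` is injective,
then for `x₀` in the image of `x*`, say `x*(z₀) = x₀`, the preimage under the
filter of the constant output sequence `(…,x₀,x₀)` consists exactly of the
constant input sequence `(…,z₀,z₀)`. Left-infinite sequences are modeled as
`ℕ → X` (index `n` is time `-n`). -/
theorem stmt5 {V D : Type*} [MetricSpace V] [CompleteSpace V]
    (c : ℝ) (hc0 : 0 ≤ c) (hc1 : c < 1)
    (F : V → D → V)
    (hF : ∀ x y : V, ∀ z : D, dist (F x z) (F y z) ≤ c * dist x y)
    (xstar : D → V) (hxstar : ∀ v, F (xstar v) v = xstar v)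
    (hinj : Function.Injective xstar)
    (hESP : ∀ z : ℕ → D, ∃! x : ℕ → V, ∀ n, x n = F (x (n + 1)) (z n))
    (U : (ℕ → D) → (ℕ → V))
    (hU : ∀ z n, U z n = F (U z (n + 1)) (z n))
    (x0 : V) (z0 : D) (hz0 : xstar z0 = x0) :
    ∀ z : ℕ → D, U z = (fun _ => x0) ↔ z = (fun _ => z0) := by
  intro z
  constructor
  · intro h
    funext n
    apply hinj
    rw [hz0]
    -- x0 is a fixed point of F · (z n)
    have hfix : F x0 (z n) = x0 := by
      have h1 := hU z n
      rw [h] at h1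
      exact h1.symm
    have hd : dist (xstar (z n)) x0 ≤ c * dist (xstar (z n)) x0 := by
      calc dist (xstar (z n)) x0 = dist (F (xstar (z n)) (z n)) (F x0 (z n)) := by
            rw [hxstar, hfix]
        _ ≤ c * dist (xstar (z n)) x0 := hF _ _ _
    have : dist (xstar (z n)) x0 = 0 := by
      nlinarith [dist_nonneg (x := xstar (z n)) (y := x0)]
    exact dist_eq_zero.mp this
  · intro h
    subst h
    obtain ⟨x, hx, huniq⟩ := hESP (fun _ => z0)
    have h1 : U (fun _ => z0) = x := huniq _ (fun n => hU _ n)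
    have h2 : (fun _ : ℕ => x0) = x := huniq _ (fun n => by
      simp [← hz0, hxstar])
    rw [h1, ← h2]
end
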